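/- Let A and B be complex unital Banach algebras with B prime, fix c ∈ A and an invertible d ∈ B, and let φ: A → B be a bijective linear map such that φ(a)φ(b) = d whenever ab = c. Set z = φ(1) and ψ(x) = z⁻¹ φ(x). Then ψ is either an algebra homomorphism (ψ(xy) = ψ(x)ψ(y) for all x, y ∈ A) or an algebra antihomomorphism (ψ(xy) = ψ(y)ψ(x) for all x, y ∈ A). -/

import Mathlib

/-!
Normalise by `z = φ 1`: put `Ψ x = z⁻¹ φ x` and `Θ x = φ (x c) d⁻¹ z`. Since
`u (u⁻¹ c) = c = (c u⁻¹) u`, for every unit `u` of `A` the elements `Ψ u` and `Θ u⁻¹` are mutually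
inverse. For `x ∈ A` and small distinct nonzero scalars `t, s`, the units `1 + t x`, `1 + s x`
satisfy `t (1 + t x)⁻¹ - s (1 + s x)⁻¹ = (t - s) ((1 + t x) (1 + s x))⁻¹`; applying `Θ` and
inverting gives `Ψ ((1 + t x) (1 + s x)) = Ψ (1 + s x) Ψ (1 + t x)`, whose `t s`-coefficient says
`Ψ (x²) = (Ψ x)²`. Thus `Ψ` is a surjective Jordan homomorphism onto the prime ring `B`, and
Herstein's argument finishes: the defects `δ = Ψ (x y) - Ψ x Ψ y` and `ε = Ψ (x y) - Ψ y Ψ x`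
satisfy `δ r ε + ε r δ = 0` for all `r`, so one of them vanishes at each `(x, y)`, and by
biadditivity one of them vanishes identically.
-/

open Filter Topology

def IsPrimeRing (R : Type*) [Mul R] [Zero R] : Prop :=
  ∀ a b : R, (∀ r : R, a * r * b = 0) → a = 0 ∨ b = 0

def IsJordanHom {F A B : Type*} [Mul A] [Mul B] [FunLike F A B] (f : F) : Prop :=
  ∀ a, f (a * a) = f a * f a

def PreservesProductsAt {A B : Type*} [Mul A] [Mul B] (φ : A → B) (c : A) (d : B) : Prop :=
  ∀ a b, a * b = c → φ a * φ b = d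

theorem AddMonoidHom.eq_zero_or_eq_zero_of_pointwise {M N : Type*} [AddZeroClass M]
    [AddZeroClass N] {g h : M →+ N} (hgh : ∀ x, g x = 0 ∨ h x = 0) : g = 0 ∨ h = 0 := by
  by_contra! hne
  obtain ⟨a, ha⟩ := DFunLike.ne_iff.1 hne.1
  obtain ⟨b, hb⟩ := DFunLike.ne_iff.1 hne.2
  have hha : h a = 0 := (hgh a).resolve_left ha
  have hgb : g b = 0 := (hgh b).resolve_right hb
  rcases hgh (a + b) with hab | hab
  · exact ha (by simpa [hgb] using hab)
  · exact hb (by simpa [hha] using hab)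

theorem IsPrimeRing.eq_zero_or_eq_zero_of_mul_add_mul {R : Type*} [Ring R] [IsAddTorsionFree R]
    (hR : IsPrimeRing R) {a b : R} (h : ∀ r, a * r * b + b * r * a = 0) : a = 0 ∨ b = 0 := by
  refine or_iff_not_imp_left.2 fun ha => ?_
  have key : ∀ x y, b * x * b * y * a = 0 := fun x y => by
    apply nsmul_right_injective (two_ne_zero (α := ℕ))
    simp only [two_nsmul, add_zero]
    linear_combination (norm := noncomm_ring) b * x * h y - h x * (y * b) + h (x * b * y)
  have hbxb : ∀ x, b * x * b = 0 := fun x => (hR _ _ (key x)).resolve_right ha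
  exact (hR b b hbxb).elim id id

section Jordan

variable {F A B : Type*} [Ring A] [Ring B] [FunLike F A B] [AddMonoidHomClass F A B]

def homDefect (f : F) : A →+ A →+ B :=
  AddMonoidHom.mul.compr₂ (f : A →+ B) - (AddMonoidHom.mul.comp (f : A →+ B)).compl₂ (f : A →+ B)

def antiHomDefect (f : F) : A →+ A →+ B :=
  AddMonoidHom.mul.compr₂ (f : A →+ B) -
    ((AddMonoidHom.mul.comp (f : A →+ B)).compl₂ (f : A →+ B)).flip

@[simp]
theorem homDefect_apply (f : F) (x y : A) : homDefect f x y = f (x * y) - f x * f y := rfl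

@[simp]
theorem antiHomDefect_apply (f : F) (x y : A) : antiHomDefect f x y = f (x * y) - f y * f x :=
  rfl

namespace IsJordanHom

variable {f : F} (hf : IsJordanHom f)
include hf

theorem map_mul_add_mul (x y : A) : f (x * y + y * x) = f x * f y + f y * f x := by
  have h := hf (x + y)
  rw [show (x + y) * (x + y) = x * x + y * y + (x * y + y * x) by noncomm_ring,
    map_add f (x * x + y * y), map_add f (x * x), map_add f x y, hf x, hf y] at h
  linear_combination (norm := noncomm_ring) h

variable [IsAddTorsionFree B]

theorem map_mul_mul_self (a b : A) : f (a * b * a) = f a * f b * f a := by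
  have h := hf.map_mul_add_mul a (a * b + b * a)
  rw [show a * (a * b + b * a) + (a * b + b * a) * a
      = a * b * a + a * b * a + (a * a * b + b * (a * a)) by noncomm_ring,
    map_add, map_add, hf.map_mul_add_mul, hf.map_mul_add_mul, hf] at h
  apply nsmul_right_injective (two_ne_zero (α := ℕ))
  simp only [two_nsmul]
  linear_combination (norm := noncomm_ring) h

theorem map_mul_mul_add_mul_mul (a b v : A) :
    f (a * v * b + b * v * a) = f a * f v * f b + f b * f v * f a := by
  have h := hf.map_mul_mul_self (a + b) v
  rw [show (a + b) * v * (a + b) = a * v * a + b * v * b + (a * v * b + b * v * a) by noncomm_ring,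
    map_add f (a * v * a + b * v * b), map_add f (a * v * a), map_add f a b, hf.map_mul_mul_self,
    hf.map_mul_mul_self] at h
  linear_combination (norm := noncomm_ring) h

theorem homDefect_mul_antiHomDefect_add (x y t : A) :
    homDefect f x y * f t * antiHomDefect f x y
      + antiHomDefect f x y * f t * homDefect f x y = 0 := by
  have hyx : f (y * x) = f x * f y + f y * f x - f (x * y) := by
    rw [← hf.map_mul_add_mul, map_add]; abel
  have h := hf.map_mul_mul_add_mul_mul (x * y) (y * x) t
  rw [show x * y * t * (y * x) = x * (y * t * y) * x by noncomm_ring,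
    show y * x * t * (x * y) = y * (x * t * x) * y by noncomm_ring, map_add,
    hf.map_mul_mul_self x, hf.map_mul_mul_self y, hf.map_mul_mul_self y, hf.map_mul_mul_self x,
    hyx] at h
  simp only [homDefect_apply, antiHomDefect_apply]
  linear_combination (norm := noncomm_ring) h

theorem map_mul_or_map_mul_swap (hB : IsPrimeRing B) (hsurj : Function.Surjective f) :
    (∀ x y, f (x * y) = f x * f y) ∨ (∀ x y, f (x * y) = f y * f x) := by
  have hpt : ∀ x y, homDefect f x y = 0 ∨ antiHomDefect f x y = 0 := fun x y =>
    hB.eq_zero_or_eq_zero_of_mul_add_mul fun r => by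
      obtain ⟨t, rfl⟩ := hsurj r
      exact hf.homDefect_mul_antiHomDefect_add x y t
  rcases AddMonoidHom.eq_zero_or_eq_zero_of_pointwise fun x =>
    AddMonoidHom.eq_zero_or_eq_zero_of_pointwise (hpt x) with h | h
  · exact .inl fun x y => sub_eq_zero.1 (by simpa using congr($h x y))
  · exact .inr fun x y => sub_eq_zero.1 (by simpa using congr($h x y))

end IsJordanHom

end Jordan

section InversePair

variable {𝕜 A B : Type*} [Field 𝕜] [Ring A] [Ring B] [Algebra 𝕜 A] [Algebra 𝕜 B]

theorem smul_inv_sub_smul_inv_of_one_add_smul {x : A} {t s : 𝕜} {u v : Aˣ}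
    (hu : (u : A) = 1 + t • x) (hv : (v : A) = 1 + s • x) :
    t • (↑u⁻¹ : A) - s • ↑v⁻¹ = (t - s) • ↑(u * v)⁻¹ := by
  have hlin : t • (v : A) - s • (u : A) = (t - s) • 1 := by
    rw [hu, hv]; module
  calc t • (↑u⁻¹ : A) - s • ↑v⁻¹ = ↑v⁻¹ * (t • (v : A) - s • (u : A)) * ↑u⁻¹ := by
        simp only [mul_sub, sub_mul, mul_smul_comm, smul_mul_assoc, Units.inv_mul, one_mul,
          mul_assoc, Units.mul_inv, mul_one]
    _ = (t - s) • ↑(u * v)⁻¹ := by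
        rw [hlin, mul_smul_comm, mul_one, smul_mul_assoc, mul_inv_rev, Units.val_mul]

theorem map_mul_self_of_inverse_pair {Ψ Θ : A →ₗ[𝕜] B} (hΨ : Ψ 1 = 1)
    (hinv : ∀ u : Aˣ, Ψ u * Θ ↑u⁻¹ = 1 ∧ Θ ↑u⁻¹ * Ψ u = 1) {x : A} {t s : 𝕜} (ht : t ≠ 0)
    (hs : s ≠ 0) (hts : t ≠ s) (hu : IsUnit (1 + t • x)) (hv : IsUnit (1 + s • x)) :
    Ψ (x * x) = Ψ x * Ψ x := by
  obtain ⟨u, hu⟩ := hu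
  obtain ⟨v, hv⟩ := hv
  let U (w : Aˣ) : Bˣ := ⟨Ψ w, Θ ↑w⁻¹, (hinv w).1, (hinv w).2⟩
  have hΨu : Ψ u = 1 + t • Ψ x := by rw [hu, map_add, map_smul, hΨ]
  have hΨv : Ψ v = 1 + s • Ψ x := by rw [hv, map_add, map_smul, hΨ]
  have hΘ : t • Θ ↑u⁻¹ - s • Θ ↑v⁻¹ = (t - s) • Θ ↑(u * v)⁻¹ := by
    rw [← map_smul, ← map_smul, ← map_sub, smul_inv_sub_smul_inv_of_one_add_smul hu hv, map_smul]
  have hUUU : U u * (U (u * v))⁻¹ * U v = 1 := by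
    apply Units.ext
    apply smul_right_injective B (sub_ne_zero.2 hts)
    calc (t - s) • (Ψ u * Θ ↑(u * v)⁻¹ * Ψ v) = Ψ u * (t • Θ ↑u⁻¹ - s • Θ ↑v⁻¹) * Ψ v := by
          rw [hΘ, mul_smul_comm, smul_mul_assoc]
      _ = t • Ψ v - s • Ψ u := by
          simp only [mul_sub, sub_mul, mul_smul_comm, smul_mul_assoc, (hinv u).1, one_mul,
            mul_assoc, (hinv v).2, mul_one]
      _ = (t - s) • 1 := by rw [hΨu, hΨv]; module
  have hUU : U (u * v) = U v * U u :=
    calc U (u * v) = U v * (U u * (U (u * v))⁻¹ * U v)⁻¹ * U u := by group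
      _ = U v * U u := by rw [hUUU, inv_one, mul_one]
  have hmul : Ψ (↑u * ↑v) = Ψ v * Ψ u := by simpa [U] using congrArg Units.val hUU
  rw [hΨu, hΨv, hu, hv] at hmul
  apply smul_right_injective B (mul_ne_zero ht hs)
  have hexp : (1 + t • x) * (1 + s • x) = 1 + (t + s) • x + (t * s) • (x * x) := by
    simp only [add_mul, mul_add, one_mul, mul_one, smul_mul_smul_comm]; module
  rw [hexp, map_add, map_add, map_smul, map_smul, hΨ] at hmul
  have hexp' : (1 + s • Ψ x) * (1 + t • Ψ x) = 1 + (t + s) • Ψ x + (t * s) • (Ψ x * Ψ x) := by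
    simp only [add_mul, mul_add, one_mul, mul_one, smul_mul_smul_comm]; module
  rw [hexp'] at hmul
  simpa using hmul

end InversePair

section Banach

variable {𝕜 A B : Type*} [NontriviallyNormedField 𝕜] [NormedRing A] [NormedAlgebra 𝕜 A]
  [CompleteSpace A] [Ring B] [Algebra 𝕜 B]

theorem eventually_isUnit_one_add_smul (x : A) : ∀ᶠ t in 𝓝 (0 : 𝕜), IsUnit (1 + t • x) :=
  (Units.isOpen.preimage (by fun_prop) : IsOpen {t : 𝕜 | IsUnit (1 + t • x)}).mem_nhds (by simp)

theorem isJordanHom_of_inverse_pair {Ψ Θ : A →ₗ[𝕜] B} (hΨ : Ψ 1 = 1)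
    (hinv : ∀ u : Aˣ, Ψ u * Θ ↑u⁻¹ = 1 ∧ Θ ↑u⁻¹ * Ψ u = 1) : IsJordanHom Ψ := by
  intro x
  have hunit : ∀ᶠ t in 𝓝[≠] (0 : 𝕜), IsUnit (1 + t • x) :=
    nhdsWithin_le_nhds (eventually_isUnit_one_add_smul x)
  have hne : ∀ᶠ t in 𝓝[≠] (0 : 𝕜), t ≠ 0 := eventually_mem_nhdsWithin
  obtain ⟨t, ht, ht0⟩ := (hunit.and hne).exists
  obtain ⟨s, hs, hs0, hst⟩ :=
    (hunit.and (hne.and (nhdsWithin_le_nhds (eventually_ne_nhds ht0.symm)))).exists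
  exact map_mul_self_of_inverse_pair hΨ hinv ht0 hs0 hst.symm ht hs

end Banach

namespace PreservesProductsAt

section Ring

variable {A B : Type*} [Ring A] [Ring B] {φ : A → B} {c : A} {d : B}
  (hφ : PreservesProductsAt φ c d) (hd : IsUnit d)
include hφ hd

theorem map_mul_map_inv_mul (u : Aˣ) : φ u * (φ (↑u⁻¹ * c) * Ring.inverse d) = 1 := by
  rw [← mul_assoc, hφ _ _ (u.mul_inv_cancel_left c), Ring.mul_inverse_cancel d hd]

theorem map_inv_mul_mul_map (u : Aˣ) : φ (↑u⁻¹ * c) * Ring.inverse d * φ u = 1 := by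
  have hleft : Ring.inverse d * φ (c * ↑u⁻¹) * φ u = 1 := by
    rw [mul_assoc, hφ _ _ (u.inv_mul_cancel_right c), Ring.inverse_mul_cancel d hd]
  rw [← left_inv_eq_right_inv hleft (hφ.map_mul_map_inv_mul hd u), hleft]

theorem isUnit_map_one : IsUnit (φ 1) := by
  have hr := hφ.map_mul_map_inv_mul hd 1
  have hl := hφ.map_inv_mul_mul_map hd 1
  simp only [inv_one, Units.val_one, one_mul] at hr hl
  exact ⟨⟨φ 1, _, hr, by rw [← hl, mul_assoc]⟩, rfl⟩

end Ring

theorem isJordanHom_mulLeft_inverse_comp {𝕜 A B : Type*} [NontriviallyNormedField 𝕜]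
    [NormedRing A] [NormedAlgebra 𝕜 A] [CompleteSpace A] [Ring B] [Algebra 𝕜 B]
    {φ : A →ₗ[𝕜] B} {c : A} {d : B} (hφ : PreservesProductsAt φ c d) (hd : IsUnit d) :
    IsJordanHom (LinearMap.mulLeft 𝕜 (Ring.inverse (φ 1)) ∘ₗ φ) := by
  have hz := hφ.isUnit_map_one hd
  refine isJordanHom_of_inverse_pair (Θ := LinearMap.mulRight 𝕜 (Ring.inverse d * φ 1) ∘ₗ φ ∘ₗ
    LinearMap.mulRight 𝕜 c) (by simpa using Ring.inverse_mul_cancel _ hz) fun u => ⟨?_, ?_⟩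
  · calc Ring.inverse (φ 1) * φ u * (φ (↑u⁻¹ * c) * (Ring.inverse d * φ 1))
        = Ring.inverse (φ 1) * (φ u * (φ (↑u⁻¹ * c) * Ring.inverse d)) * φ 1 := by
          simp only [mul_assoc]
      _ = 1 := by rw [hφ.map_mul_map_inv_mul hd, mul_one, Ring.inverse_mul_cancel _ hz]
  · calc φ (↑u⁻¹ * c) * (Ring.inverse d * φ 1) * (Ring.inverse (φ 1) * φ u)
        = φ (↑u⁻¹ * c) * Ring.inverse d * (φ 1 * Ring.inverse (φ 1)) * φ u := by
          simp only [mul_assoc]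
      _ = 1 := by rw [Ring.mul_inverse_cancel _ hz, mul_one, hφ.map_inv_mul_mul_map hd]

end PreservesProductsAt

theorem stmt15_general {A B : Type*} [NormedRing A] [NormedAlgebra ℂ A] [CompleteSpace A]
    [NormedRing B] [NormedAlgebra ℂ B]
    (hprime : ∀ a b : B, (∀ r : B, a * r * b = 0) → a = 0 ∨ b = 0)
    (c : A) (d : B) (hd : IsUnit d)
    (φ : A →ₗ[ℂ] B) (hbij : Function.Bijective φ)
    (h : ∀ a b : A, a * b = c → φ a * φ b = d) :
    (∀ x y : A, Ring.inverse (φ 1) * φ (x * y)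
        = (Ring.inverse (φ 1) * φ x) * (Ring.inverse (φ 1) * φ y)) ∨
      (∀ x y : A, Ring.inverse (φ 1) * φ (x * y)
        = (Ring.inverse (φ 1) * φ y) * (Ring.inverse (φ 1) * φ x)) := by
  have hφ : PreservesProductsAt φ c d := h
  have : IsAddTorsionFree B := .of_isTorsionFree ℂ B
  have hsurj : Function.Surjective (LinearMap.mulLeft ℂ (Ring.inverse (φ 1)) ∘ₗ φ) := fun b => by
    obtain ⟨a, ha⟩ := hbij.2 (φ 1 * b)
    exact ⟨a, by simp [ha, ← mul_assoc, Ring.inverse_mul_cancel _ (hφ.isUnit_map_one hd)]⟩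
  exact (hφ.isJordanHom_mulLeft_inverse_comp hd).map_mul_or_map_mul_swap hprime hsurj

/-- Theorem 4.1(4). With hypotheses as before, `B` prime, and
`ψ x = φ(1)⁻¹ * φ x`, the map `ψ` is either an algebra homomorphism or an algebra
antihomomorphism. -/
theorem stmt15 {A B : Type*} [NormedRing A] [NormedAlgebra ℂ A] [CompleteSpace A]
    [NormedRing B] [NormedAlgebra ℂ B] [CompleteSpace B]
    (hprime : ∀ a b : B, (∀ r : B, a * r * b = 0) → a = 0 ∨ b = 0)
    (c : A) (d : B) (hd : IsUnit d)
    (φ : A →ₗ[ℂ] B) (hbij : Function.Bijective φ)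
    (h : ∀ a b : A, a * b = c → φ a * φ b = d) :
    (∀ x y : A, Ring.inverse (φ 1) * φ (x * y)
        = (Ring.inverse (φ 1) * φ x) * (Ring.inverse (φ 1) * φ y)) ∨
      (∀ x y : A, Ring.inverse (φ 1) * φ (x * y)
        = (Ring.inverse (φ 1) * φ y) * (Ring.inverse (φ 1) * φ x)) :=
  stmt15_general hprime c d hd φ hbij h
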